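/- Let η be a prime (primitive) binary word of length k and ξ a factor of η^n with |ξ| ≥ k. Then |n − |ξ|/k − |η^n|_ξ| ≤ 1, i.e., the number of occurrences of ξ in η^n differs from n − |ξ|/k by at most 1. -/

import Mathlib

open Filter

/-- Number of occurrences of `ξ` as a factor of `w` (occurrence at position `i`
means `ξ = w_{i+1}...w_{i+|ξ|}`). -/
def occ (w ξ : List Bool) : ℕ :=
  ((List.range w.length).filter (fun i => ξ.isPrefixOf (w.drop i))).length

/-- `ℓ`-fold concatenation `η^ℓ` of the word `η`. -/
def wpow (η : List Bool) (ℓ : ℕ) : List Bool := (List.replicate ℓ η).flatten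

/-- The Kamae–Xue complexity `Σ(w) = Σ_{ξ ∈ {0,1}^+} |w|_ξ²`.  Since only
factors of `w` contribute nonzero terms, the sum is taken over the (finite) set
of nonempty sublists of `w`, which contains all factors of `w`. -/
def kxSum (w : List Bool) : ℕ :=
  ∑ ξ ∈ w.sublists.toFinset.filter (fun ξ => ξ ≠ []), (occ w ξ) ^ 2

/-- `Λ(w) = max{|η|²(ℓ+1)³ : η nonempty, ℓ ≥ 1, η^ℓ a factor of w}`. -/
noncomputable def Lam (w : List Bool) : ℕ :=
  sSup {m | ∃ η ℓ, η ≠ ([] : List Bool) ∧ 1 ≤ ℓ ∧ wpow η ℓ <:+: w ∧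
    m = η.length ^ 2 * (ℓ + 1) ^ 3}

/-- A nonempty word is prime (primitive) if it is not a proper power. -/
def IsPrimeWord (η : List Bool) : Prop :=
  η ≠ [] ∧ ∀ ζ ℓ, 2 ≤ ℓ → η ≠ wpow ζ ℓ

/-- `|v|_{ξ,m}`: occurrences of `ξ` in `v` ending in the last `m` positions. -/
def occEnd (v ξ : List Bool) (m : ℕ) : ℕ :=
  ((List.range v.length).filter
    (fun i => ξ.isPrefixOf (v.drop i) && decide (v.length < i + ξ.length + m))).length

/-- The prefix `x_1 x_2 ⋯ x_n` of the infinite sequence `x`. -/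
def pref (x : ℕ → Bool) (n : ℕ) : List Bool := (List.range n).map x

/-! Read `η^n` through the infinite periodic word `f = η^ω`: an occurrence of `ξ` at `i` means
`ξ_t = f (i + t)` for `t < |ξ|`. Since `|ξ| ≥ k`, occurrences at `i ≤ j` make `f` periodic with
period `j - i`, hence with period `gcd (j - i, k)`; a period that properly divides `k` would make
`η` a proper power, so `k ∣ j - i`. Thus the occurrences are exactly the positions
`i ≤ nk - |ξ|` in one residue class mod `k`, and a residue class meets an interval of length `M`
in `c` points with `|M - 1 - kc| ≤ k`. -/

open Function Finset

theorem Function.Periodic.nat_gcd {α : Type*} {f : ℕ → α} {a b : ℕ}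
    (ha : Periodic f a) (hb : Periodic f b) : Periodic f (Nat.gcd a b) := by
  rcases Nat.eq_zero_or_pos b with rfl | hb0
  · simpa using ha
  rcases (Nat.gcd_le_right a hb0).lt_or_eq with hlt | heq
  · obtain ⟨m, -, hm⟩ := Nat.exists_mul_mod_eq_gcd hlt
    intro x
    have hx := hb.nat_mul (a * m / b) (x + Nat.gcd a b)
    rw [Nat.cast_id, ← hm, add_assoc, Nat.mod_add_div', hm] at hx
    rw [← hx, mul_comm a m]
    simpa using ha.nat_mul m x
  · rwa [heq]

theorem Function.Periodic.periodic_sub_of_add_eq {α : Type*} {f : ℕ → α} {k : ℕ}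
    (hf : Periodic f k) (hk : 0 < k) {i j : ℕ} (hij : i ≤ j)
    (h : ∀ t < k, f (i + t) = f (j + t)) : Periodic f (j - i) := by
  have hmul : ∀ q x, f (x + q * k) = f x := fun q x => by simpa using hf.nat_mul q x
  have hall : ∀ t, f (i + t) = f (j + t) := by
    intro t
    have hmod : ∀ a, f (a + t) = f (a + t % k) := fun a => by
      rw [← hmul (t / k) (a + t % k), add_assoc, Nat.mod_add_div']
    rw [hmod i, hmod j]
    exact h _ (Nat.mod_lt t hk)
  intro x
  have hi : i ≤ i * k := Nat.le_mul_of_pos_right i hk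
  calc f (x + (j - i)) = f (x + (j - i) + i * k) := (hmul i _).symm
    _ = f (j + (x + i * k - i)) := by congr 1; omega
    _ = f (i + (x + i * k - i)) := (hall _).symm
    _ = f (x + i * k) := by congr 1; omega
    _ = f x := hmul i x

def periodicExt (η : List Bool) (m : ℕ) : Bool := η.getD (m % η.length) false

theorem periodicExt_periodic (η : List Bool) : Periodic (periodicExt η) η.length := by
  intro m
  simp [periodicExt]

theorem length_wpow (η : List Bool) (ℓ : ℕ) : (wpow η ℓ).length = ℓ * η.length := by
  simp [wpow]

theorem getElem_wpow (η : List Bool) (ℓ m : ℕ) (h : m < (wpow η ℓ).length) :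
    (wpow η ℓ)[m] = periodicExt η m := by
  induction ℓ generalizing m with
  | zero => simp [wpow] at h
  | succ ℓ ih =>
    have hsucc : wpow η (ℓ + 1) = η ++ wpow η ℓ := by simp [wpow, List.replicate_succ]
    simp only [hsucc, List.getElem_append]
    split_ifs with hm
    · simp [periodicExt, Nat.mod_eq_of_lt hm, hm]
    · rw [ih]
      conv_rhs => rw [← Nat.sub_add_cancel (not_lt.mp hm)]
      exact (periodicExt_periodic η _).symm

theorem eq_wpow_take_of_periodic (η : List Bool) {g : ℕ} (hg : g ∣ η.length)
    (h : Periodic (periodicExt η) g) : η = wpow (η.take g) (η.length / g) := by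
  rcases Nat.eq_zero_or_pos η.length with hk | hk
  · simp [List.length_eq_zero_iff.mp hk, wpow]
  have hgk : g ≤ η.length := Nat.le_of_dvd hk hg
  have hg0 : 0 < g := Nat.pos_of_dvd_of_pos hg hk
  apply List.ext_getElem
  · rw [length_wpow, List.length_take, min_eq_left hgk, Nat.div_mul_cancel hg]
  · intro i hi _
    have hig : i % g < η.length := (Nat.mod_lt i hg0).trans_le hgk
    calc η[i] = periodicExt η i := by simp [periodicExt, Nat.mod_eq_of_lt hi, hi]
      _ = periodicExt η (i % g) := (h.map_mod_nat i).symm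
      _ = periodicExt (η.take g) i := by
        simp [periodicExt, min_eq_left hgk, Nat.mod_eq_of_lt hig, Nat.mod_lt i hg0, hig]
      _ = _ := (getElem_wpow _ _ _ _).symm

theorem IsPrimeWord.dvd_of_periodic {η : List Bool} (hη : IsPrimeWord η) {d : ℕ}
    (h : Periodic (periodicExt η) d) : η.length ∣ d := by
  have hk : 0 < η.length := List.length_pos_iff.mpr hη.1
  have hg : Nat.gcd d η.length ∣ η.length := Nat.gcd_dvd_right d η.length
  have hq : η.length / Nat.gcd d η.length < 2 := by
    by_contra! hq
    exact hη.2 _ _ hq (eq_wpow_take_of_periodic η hg (h.nat_gcd (periodicExt_periodic η)))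
  have hq0 : 0 < η.length / Nat.gcd d η.length :=
    Nat.div_pos (Nat.le_of_dvd hk hg) (Nat.gcd_pos_of_pos_right d hk)
  rw [← Nat.eq_of_dvd_of_div_eq_one hg (by omega)]
  exact Nat.gcd_dvd_left d η.length

theorem IsPrimeWord.forall_periodicExt_add_eq_iff_modEq {η : List Bool} (hη : IsPrimeWord η)
    {L : ℕ} (hL : η.length ≤ L) {i j : ℕ} :
    (∀ t < L, periodicExt η (i + t) = periodicExt η (j + t)) ↔ i ≡ j [MOD η.length] := by
  have hk : 0 < η.length := List.length_pos_iff.mpr hη.1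
  have hper := periodicExt_periodic η
  constructor
  · intro h
    wlog hij : i ≤ j generalizing i j
    · exact (this (fun t ht => (h t ht).symm) (le_of_not_ge hij)).symm
    have hd := hper.periodic_sub_of_add_eq hk hij fun t ht => h t (ht.trans_le hL)
    exact (Nat.modEq_iff_dvd' hij).mpr (hη.dvd_of_periodic hd)
  · intro h t _
    rw [← hper.map_mod_nat (i + t), ← hper.map_mod_nat (j + t), (h.add_right t :)]

theorem prefix_drop_wpow_iff {ξ : List Bool} (hξ : 0 < ξ.length) (η : List Bool) (n i : ℕ) :
    ξ <+: (wpow η n).drop i ↔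
      i + ξ.length ≤ n * η.length ∧
        ∀ t (ht : t < ξ.length), ξ[t] = periodicExt η (i + t) := by
  simp only [List.prefix_iff_getElem, List.getElem_drop, getElem_wpow, List.length_drop,
    length_wpow]
  constructor <;> rintro ⟨hlen, h⟩ <;> exact ⟨by omega, h⟩

theorem occ_eq_card_filter (w ξ : List Bool) :
    occ w ξ = #{i ∈ range w.length | ξ <+: w.drop i} := by
  rw [← Nat.count_eq_card_filter_range]
  simp only [occ, Nat.count, List.countP_eq_length_filter]
  congr 2
  ext i
  rw [Bool.eq_iff_iff, decide_eq_true_iff, List.isPrefixOf_iff_prefix]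

theorem occ_wpow_eq_count {η ξ : List Bool} (hη : IsPrimeWord η)
    (hlen : η.length ≤ ξ.length) (n : ℕ) {i₀ : ℕ} (hi₀ : ξ <+: (wpow η n).drop i₀) :
    occ (wpow η n) ξ = (n * η.length + 1 - ξ.length).count (· ≡ i₀ [MOD η.length]) := by
  have hL : 0 < ξ.length := (List.length_pos_iff.mpr hη.1).trans_le hlen
  obtain ⟨-, hξ₀⟩ := (prefix_drop_wpow_iff hL η n i₀).mp hi₀
  rw [occ_eq_card_filter, Nat.count_eq_card_filter_range, length_wpow]
  congr 1
  ext i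
  simp only [mem_filter, mem_range, prefix_drop_wpow_iff hL,
    ← hη.forall_periodicExt_add_eq_iff_modEq hlen]
  constructor
  · rintro ⟨-, hiN, h⟩
    exact ⟨by omega, fun t ht => (h t ht).symm.trans (hξ₀ t ht)⟩
  · rintro ⟨hiN, h⟩
    exact ⟨by omega, by omega, fun t ht => (hξ₀ t ht).trans (h t ht).symm⟩

theorem Nat.abs_sub_mul_count_modEq_le {k : ℕ} (hk : 0 < k) (M v : ℕ) :
    |(M : ℤ) - 1 - k * M.count (· ≡ v [MOD k])| ≤ k := by
  rw [Nat.count_modEq_card M hk, abs_le]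
  have hM := Nat.div_add_mod M k
  have hr : ((M % k : ℕ) : ℤ) < k := by exact_mod_cast Nat.mod_lt M hk
  generalize M / k = q, M % k = r at *
  subst hM
  have hr0 : (0 : ℤ) ≤ r := Nat.cast_nonneg r
  split_ifs with h
  · have hr1 : (1 : ℤ) ≤ r := by exact_mod_cast (Nat.zero_le _).trans_lt h
    push_cast
    constructor <;> linarith
  · push_cast
    constructor <;> linarith

/-- if `η` is prime of length `k` and `ξ` is a factor of `η^n`
with `|ξ| ≥ k`, then `|n − |ξ|/k − |η^n|_ξ| ≤ 1`. -/
theorem occ_in_pow_approx (η ξ : List Bool) (n : ℕ)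
    (hη : IsPrimeWord η) (hlen : η.length ≤ ξ.length) (hξ : ξ <:+: wpow η n) :
    |(n : ℝ) - (ξ.length : ℝ) / (η.length : ℝ) - (occ (wpow η n) ξ : ℝ)| ≤ 1 := by
  have hk : 0 < η.length := List.length_pos_iff.mpr hη.1
  have hLN : ξ.length ≤ n * η.length := length_wpow η n ▸ hξ.length_le
  obtain ⟨s, t, hst⟩ := hξ
  have hi₀ : ξ <+: (wpow η n).drop s.length := by
    rw [← hst, List.append_assoc, List.drop_left]
    exact List.prefix_append ξ t
  have hcount := Nat.abs_sub_mul_count_modEq_le hk (n * η.length + 1 - ξ.length) s.length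
  rw [← occ_wpow_eq_count hη hlen n hi₀, Nat.cast_sub (by omega)] at hcount
  have hcountZ :
      |(n * η.length - ξ.length - η.length * occ (wpow η n) ξ : ℤ)| ≤ η.length := by
    convert hcount using 2
    push_cast
    ring
  have hkR : (0 : ℝ) < η.length := by exact_mod_cast hk
  rw [show (n : ℝ) - ξ.length / η.length - occ (wpow η n) ξ
      = (n * η.length - ξ.length - η.length * occ (wpow η n) ξ) / η.length by field_simp,
    abs_div, abs_of_pos hkR, div_le_one hkR]
  exact_mod_cast hcountZ
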